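/- Let m ≥ 3, 2 ≤ j ≤ m - 1, k ≥ 3m - 2j, p prime, and 1 ≤ d ≤ p - 1. Then the polynomial F_6 = (p^m - p) + z ± (p^k d) z^j - z^m is irreducible in ℤ[z]. -/

import Mathlib

/-!
Up to sign, `F₆` is the monic polynomial `Q = z^m - ε p^k d z^j - z - (p^m - p)`. A root `z` with
`|z| ≥ 1` satisfies `p^k |z|^j ≤ |z^m - z - (p^m - p)| ≤ p^m |z|^m`, and since `k ≥ m + 2(m - j)`
this forces `|z| ≥ p^2`: no root lies in the annulus `1 ≤ |z| < p^2`.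

Let `Q = f g` with `f, g` monic and nonconstant. As `p ∥ Q(0) = -(p^m - p)`, one factor, say `g`,
has `p ∤ g(0)`, hence `p ∤ g(p)`; since `Q(p) = -ε d p^(k+j)`, this gives `|g(p)| ≤ d < p`.
If `g` has a root of modulus `≥ p^2`, then `|g(p)| = ∏ |p - z| ≥ p^2 - p ≥ p`, as every other
factor is `≥ 1`. Otherwise all roots of `g` lie in the unit disc and `0 < |g(0)| = ∏ |z| < 1`.
-/

open Polynomial

namespace Polynomial

section Norm

variable {R : Type*} [CommRing R] [Algebra R ℂ] {b : R[X]}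

lemma norm_aeval_lt_one_of_forall_mem_aroots (hb : b.Monic) (hdeg : b.natDegree ≠ 0) {x : ℂ}
    (h : ∀ z ∈ b.aroots ℂ, ‖x - z‖ < 1) : ‖aeval x b‖ < 1 := by
  rw [(IsAlgClosed.splits _).aeval_eq_prod_aroots_of_monic hb]
  have hne : b.aroots ℂ ≠ 0 := by
    rw [← Multiset.card_pos, ← (IsAlgClosed.splits _).natDegree_eq_card_roots, hb.natDegree_map]
    exact Nat.pos_of_ne_zero hdeg
  refine Multiset.prod_induction_nonempty (‖·‖ < 1) (fun u v hu hv => ?_) (by simpa using hne) ?_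
  · rw [norm_mul]
    exact mul_lt_one_of_nonneg_of_lt_one_left (norm_nonneg u) hu hv.le
  · intro w hw
    obtain ⟨z, hz, rfl⟩ := Multiset.mem_map.1 hw
    exact h z hz

lemma norm_sub_le_norm_aeval_of_mem_aroots (hb : b.Monic) {x z₀ : ℂ} (hz₀ : z₀ ∈ b.aroots ℂ)
    (h : ∀ z ∈ b.aroots ℂ, 1 ≤ ‖x - z‖) : ‖x - z₀‖ ≤ ‖aeval x b‖ := by
  classical
  rw [(IsAlgClosed.splits _).aeval_eq_prod_aroots_of_monic hb, ← Multiset.cons_erase hz₀,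
    Multiset.map_cons, Multiset.prod_cons, norm_mul]
  refine le_mul_of_one_le_right (norm_nonneg _) ?_
  refine Multiset.prod_induction (1 ≤ ‖·‖) _ (fun u v hu hv => ?_) (by simp) ?_
  · rw [norm_mul]
    exact one_le_mul_of_one_le_of_one_le hu hv
  · intro w hw
    obtain ⟨z, hz, rfl⟩ := Multiset.mem_map.1 hw
    exact h z (Multiset.mem_of_mem_erase hz)

lemma lt_norm_aeval_of_mem_aroots (hb : b.Monic) {x z₀ : ℂ} {r : ℝ} (hx : 2 ≤ ‖x‖) (hr : 1 ≤ r)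
    (hroots : ∀ z ∈ b.aroots ℂ, ‖z‖ < 1 ∨ ‖x‖ + r < ‖z‖) (hz₀ : z₀ ∈ b.aroots ℂ)
    (hz₀r : ‖x‖ + r < ‖z₀‖) : r < ‖aeval x b‖ := by
  have hdist (z : ℂ) : ‖x‖ - ‖z‖ ≤ ‖x - z‖ ∧ ‖z‖ - ‖x‖ ≤ ‖x - z‖ :=
    ⟨norm_sub_norm_le x z, by simpa [norm_sub_rev] using norm_sub_norm_le z x⟩
  refine lt_of_lt_of_le ?_ (norm_sub_le_norm_aeval_of_mem_aroots hb hz₀ fun z hz => ?_)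
  · linarith [hdist z₀]
  · rcases hroots z hz with h | h <;> linarith [hdist z]

end Norm

lemma aeval_intCast {A : Type*} [Ring A] (f : ℤ[X]) (n : ℤ) :
    aeval (n : A) f = ((f.eval n : ℤ) : A) := by
  simp [aeval_def, eval₂_eq_eval_map, eval_intCast_map]

variable {Q b : ℤ[X]} {p N : ℕ} {c : ℤ}

lemma eval_dvd_of_not_dvd_eval_zero (hp : p.Prime) (hb : ¬ (p : ℤ) ∣ b.eval 0)
    (hbQ : b ∣ Q) (hQp : Q.eval (p : ℤ) = p ^ N * c) : b.eval (p : ℤ) ∣ c := by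
  have hbp : ¬ (p : ℤ) ∣ b.eval (p : ℤ) := by
    intro h
    exact hb ((dvd_sub_right h).1 (by simpa using sub_dvd_eval_sub (p : ℤ) 0 b))
  have hcop : IsCoprime (b.eval (p : ℤ)) ((p : ℤ) ^ N) :=
    ((Nat.prime_iff_prime_int.1 hp).coprime_iff_not_dvd.2 hbp).symm.pow_right
  exact hcop.dvd_of_dvd_mul_left (hQp ▸ eval_dvd hbQ)

lemma not_dvd_of_roots_outside_annulus (hp : p.Prime) (hpQ0 : ¬ (p : ℤ) ^ 2 ∣ Q.eval 0)
    (hQp : Q.eval (p : ℤ) = p ^ N * c)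
    (hroots : ∀ z : ℂ, aeval z Q = 0 → ‖z‖ < 1 ∨ p + |(c : ℝ)| < ‖z‖)
    (hb : b.Monic) (hbdeg : b.natDegree ≠ 0) (hbp : ¬ (p : ℤ) ∣ b.eval 0) : ¬ b ∣ Q := by
  intro hbQ
  have hroots_b : ∀ z ∈ b.aroots ℂ, ‖z‖ < 1 ∨ p + |(c : ℝ)| < ‖z‖ := by
    intro z hz
    obtain ⟨q, rfl⟩ := hbQ
    exact hroots z (by simp [(mem_aroots.1 hz).2])
  have hc : c ≠ 0 := by
    rintro rfl
    have := hroots p (by simpa [hQp] using aeval_intCast (A := ℂ) Q p)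
    exact hp.ne_zero (by simpa using this)
  have hbc : |b.eval (p : ℤ)| ≤ |c| := Int.le_of_dvd (abs_pos.2 hc)
    ((abs_dvd_abs _ _).2 (eval_dvd_of_not_dvd_eval_zero hp hbp hbQ hQp))
  by_cases hbig : ∃ z₀ ∈ b.aroots ℂ, p + |(c : ℝ)| < ‖z₀‖
  · obtain ⟨z₀, hz₀, hz₀big⟩ := hbig
    have := lt_norm_aeval_of_mem_aroots hb (x := ((p : ℤ) : ℂ)) (r := |(c : ℝ)|)
      (by simpa using hp.two_le)
      (by exact_mod_cast Int.one_le_abs hc) (by simpa using hroots_b) hz₀ (by simpa using hz₀big)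
    rw [aeval_intCast, Complex.norm_intCast] at this
    exact not_le.2 (by exact_mod_cast this) hbc
  · push Not at hbig
    have hb0 : b.eval 0 ≠ 0 := by
      intro h
      have := eval_dvd (x := 0) hbQ
      rw [h, zero_dvd_iff] at this
      exact hpQ0 (by rw [this]; exact dvd_zero _)
    have := norm_aeval_lt_one_of_forall_mem_aroots hb hbdeg (x := ((0 : ℤ) : ℂ)) fun z hz => by
      rcases hroots_b z hz with h | h
      · simpa using h
      · exact absurd h (not_lt.2 (hbig z hz))
    rw [aeval_intCast, Complex.norm_intCast] at this
    exact hb0 (Int.abs_lt_one_iff.1 (by exact_mod_cast this))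

theorem Monic.irreducible_of_roots_outside_annulus (hQ : Q.Monic) (hQ1 : Q ≠ 1) (hp : p.Prime)
    (hpQ0 : ¬ (p : ℤ) ^ 2 ∣ Q.eval 0) (hQp : Q.eval (p : ℤ) = p ^ N * c)
    (hroots : ∀ z : ℂ, aeval z Q = 0 → ‖z‖ < 1 ∨ p + |(c : ℝ)| < ‖z‖) : Irreducible Q := by
  refine hQ.irreducible_iff_natDegree.2 ⟨hQ1, fun f g hf hg hfg => ?_⟩
  by_contra! hdeg
  by_cases hpf : (p : ℤ) ∣ f.eval 0
  · have hpg : ¬ (p : ℤ) ∣ g.eval 0 := fun hpg =>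
      hpQ0 (by rw [← hfg, eval_mul, sq]; exact mul_dvd_mul hpf hpg)
    exact not_dvd_of_roots_outside_annulus hp hpQ0 hQp hroots hg hdeg.2 hpg
      (hfg ▸ dvd_mul_left g f)
  · exact not_dvd_of_roots_outside_annulus hp hpQ0 hQp hroots hf hdeg.1 hpf
      (hfg ▸ dvd_mul_right f g)

end Polynomial

lemma norm_lt_one_or_sq_le_norm_of_root {p : ℝ} {m j k : ℕ} {A B z : ℂ} (hp : 1 ≤ p)
    (hjm : j < m) (hk : m + 2 * (m - j) ≤ k) (hA : p ^ k ≤ ‖A‖) (hB : ‖B‖ ≤ p ^ m - 2)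
    (hz : z ^ m - A * z ^ j - z - B = 0) : ‖z‖ < 1 ∨ p ^ 2 ≤ ‖z‖ := by
  by_contra! h
  obtain ⟨hz1, hzp⟩ := h
  set r := ‖z‖
  have hrm : r ≤ r ^ m := le_self_pow₀ hz1 (by omega)
  have hAz : A * z ^ j = z ^ m - z - B := by linear_combination -hz
  have hpow : p ^ k * r ^ j ≤ p ^ m * r ^ (m - j) * r ^ j :=
    calc p ^ k * r ^ j ≤ ‖A * z ^ j‖ := by rw [norm_mul, norm_pow]; gcongr
      _ ≤ r ^ m + r + ‖B‖ := by
          rw [hAz]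
          refine (norm_sub_le _ _).trans ?_
          gcongr
          exact (norm_sub_le _ _).trans (by rw [norm_pow])
      _ ≤ p ^ m * r ^ m := by nlinarith [norm_nonneg B]
      _ = p ^ m * r ^ (m - j) * r ^ j := by rw [mul_assoc, ← pow_add, Nat.sub_add_cancel hjm.le]
  have hk' : p ^ m * (p ^ 2) ^ (m - j) ≤ p ^ k := by
    rw [← pow_mul, ← pow_add]
    exact pow_le_pow_right₀ hp hk
  have hle : (p ^ 2) ^ (m - j) ≤ r ^ (m - j) :=
    le_of_mul_le_mul_left (hk'.trans (le_of_mul_le_mul_right hpow (by positivity)))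
      (by positivity)
  exact not_le.2 (pow_lt_pow_left₀ hzp (by positivity) (by omega)) hle

lemma not_sq_dvd_pow_sub_self {p m : ℕ} (hp : 2 ≤ p) (hm : 2 ≤ m) :
    ¬ (p : ℤ) ^ 2 ∣ (p : ℤ) ^ m - p := by
  intro h
  have hdvd : (p : ℤ) ^ 2 ∣ p := by
    simpa using dvd_sub (pow_dvd_pow (p : ℤ) hm) h
  have := Int.le_of_dvd (by omega) hdvd
  nlinarith

noncomputable def F₆ (p m j k d : ℕ) (ε : ℤ) : ℤ[X] :=
  C ((p : ℤ) ^ m - p) + X + C (ε * (p : ℤ) ^ k * d) * X ^ j - X ^ m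

section F₆

variable {p m j k d : ℕ} {ε : ℤ}

lemma monic_neg_F₆ (hm : 2 ≤ m) (hjm : j < m) : (-F₆ p m j k d ε).Monic := by
  have : -F₆ p m j k d ε =
      X ^ m - C (ε * (p : ℤ) ^ k * d) * X ^ j - X - C ((p : ℤ) ^ m - p) := by
    rw [F₆]; ring
  rw [this]
  monicity!
  rw [max_eq_left (by omega)]
  simp [hjm.ne', show 1 ≠ m by omega, show 1 ≤ m by omega, hjm.le]

lemma eval_zero_F₆ (hm : m ≠ 0) (hj : j ≠ 0) : (F₆ p m j k d ε).eval 0 = (p : ℤ) ^ m - p := by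
  simp [F₆, zero_pow hm, zero_pow hj]

lemma eval_natCast_F₆ : (F₆ p m j k d ε).eval (p : ℤ) = (p : ℤ) ^ (k + j) * (ε * d) := by
  simp [F₆]
  ring

lemma norm_lt_one_or_lt_norm_of_aeval_F₆_eq_zero (hεd : ε * d ≠ 0) (hεdp : |ε * d| < p)
    (hjm : j < m) (hk : m + 2 * (m - j) ≤ k) {z : ℂ} (hz : aeval z (F₆ p m j k d ε) = 0) :
    ‖z‖ < 1 ∨ p + |((ε * d : ℤ) : ℝ)| < ‖z‖ := by
  have hεdp' : |((ε * d : ℤ) : ℝ)| + 1 ≤ p := by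
    rw [← Int.cast_abs]; exact_mod_cast hεdp
  have hp1 : (1 : ℝ) ≤ p := by linarith [abs_nonneg ((ε * d : ℤ) : ℝ)]
  have hp2 : (2 : ℝ) ≤ p := by
    have : (1 : ℝ) ≤ |((ε * d : ℤ) : ℝ)| := by exact_mod_cast Int.one_le_abs hεd
    linarith
  refine (norm_lt_one_or_sq_le_norm_of_root hp1 hjm hk (A := (ε * p ^ k * d : ℤ))
    (B := (p ^ m - p : ℤ)) ?_ ?_ ?_).imp_right fun h => lt_of_lt_of_le (by nlinarith) h
  · rw [Complex.norm_intCast, show ε * (p : ℤ) ^ k * d = p ^ k * (ε * d) by ring]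
    push_cast
    rw [abs_mul, abs_of_nonneg (by positivity)]
    exact le_mul_of_one_le_right (by positivity) (by exact_mod_cast Int.one_le_abs hεd)
  · have hpm : (p : ℝ) ≤ (p : ℝ) ^ m := le_self_pow₀ hp1 (by omega)
    rw [Complex.norm_intCast]
    push_cast
    rw [abs_of_nonneg (by linarith)]
    linarith
  · simp [F₆] at hz
    push_cast
    linear_combination -hz

theorem irreducible_neg_F₆ (hp : p.Prime) (hεd : ε * d ≠ 0) (hεdp : |ε * d| < p) (hj : j ≠ 0)
    (hjm : j < m) (hk : m + 2 * (m - j) ≤ k) : Irreducible (-F₆ p m j k d ε) := by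
  have h0 : (F₆ p m j k d ε).eval 0 = (p : ℤ) ^ m - p := eval_zero_F₆ (by omega) hj
  have hpm : (p : ℤ) < p ^ m :=
    calc (p : ℤ) = p ^ 1 := (pow_one _).symm
      _ < p ^ m := pow_lt_pow_right₀ (by exact_mod_cast hp.one_lt : (1 : ℤ) < p) (by omega)
  refine (monic_neg_F₆ (by omega) hjm).irreducible_of_roots_outside_annulus
    (fun h => by have := congrArg (eval 0) h; simp [h0] at this; omega) hp
    (by rw [eval_neg, h0, dvd_neg]; exact not_sq_dvd_pow_sub_self hp.two_le (by omega))
    (N := k + j) (c := -(ε * d)) (by simp [eval_natCast_F₆]) fun z hz => ?_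
  rw [Int.cast_neg, abs_neg]
  exact norm_lt_one_or_lt_norm_of_aeval_F₆_eq_zero hεd hεdp hjm hk (by simpa using hz)

end F₆

open Polynomial in
theorem stmt_19_general (m j k : ℕ) (hj : 2 ≤ j) (hjm : j ≤ m - 1)
    (hk : 3 * m - 2 * j ≤ k)
    (p : ℕ) (hp : p.Prime) (d : ℕ) (hd : 1 ≤ d) (hdp : d ≤ p - 1)
    (ε : ℤ) (hε : ε = 1 ∨ ε = -1) :
    Irreducible
      (C ((p : ℤ) ^ m - p) + X + C (ε * (p : ℤ) ^ k * d) * X ^ j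
        - X ^ m) := by
  have hp2 := hp.two_le
  have hεd : |ε * d| = d := by rcases hε with rfl | rfl <;> simp
  have hirr := irreducible_neg_F₆ (j := j) (m := m) (k := k) hp
    (by rw [← abs_ne_zero, hεd]; omega) (by rw [hεd]; omega) (by omega) (by omega) (by omega)
  simpa [F₆] using Associated.irreducible ⟨-1, mul_neg_one _⟩ hirr

open Polynomial in
theorem stmt_19 (m j k : ℕ) (hm : 3 ≤ m) (hj : 2 ≤ j) (hjm : j ≤ m - 1)
    (hk : 3 * m - 2 * j ≤ k)
    (p : ℕ) (hp : p.Prime) (d : ℕ) (hd : 1 ≤ d) (hdp : d ≤ p - 1)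
    (ε : ℤ) (hε : ε = 1 ∨ ε = -1) :
    Irreducible
      (C ((p : ℤ) ^ m - p) + X + C (ε * (p : ℤ) ^ k * d) * X ^ j
        - X ^ m) :=
  stmt_19_general m j k hj hjm hk p hp d hd hdp ε hε
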